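/- Assume A = R * R[1] and that the additive quotient A/R[1] is abelian. Then the image of R in A/R[1] is the subcategory of enough projective objects of A/R[1]: every object of the image of R is projective, and every object of A/R[1] receives an epimorphism from an object in the image of R. -/

import Mathlib

open CategoryTheory CategoryTheory.Limits CategoryTheory.Pretriangulated

universe v u w

namespace RelCT

/-- Krull–Schmidt: every object decomposes as a finite biproduct of objects with local
endomorphism rings. -/
def KrullSchmidtCat (C : Type u) [Category.{v} C] [Preadditive C] : Prop :=
  ∀ X : C, ∃ (n : ℕ) (f : Fin n → C) (p : ∀ i, X ⟶ f i) (ι : ∀ i, f i ⟶ X),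
    (∀ i, ι i ≫ p i = 𝟙 (f i)) ∧ (∑ i, p i ≫ ι i) = 𝟙 X ∧
    ∀ i (φ : f i ⟶ f i), IsIso φ ∨ IsIso (𝟙 (f i) - φ)

/-- `Fac W`: objects admitting an epimorphism from an object of `W`. -/
def FacSet {Q : Type w} [Category Q] (W : Set Q) : Set Q :=
  {Y | ∃ X ∈ W, ∃ p : X ⟶ Y, Epi p}

/-- `Ext¹(X, F) = 0`, expressed as: every short exact sequence
`0 → F → E → X → 0` splits. -/
def Ext1Zero {Q : Type w} [Category Q] [Abelian Q] (X F : Q) : Prop :=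
  ∀ S : CategoryTheory.ShortComplex Q, S.ShortExact → (S.X₁ ≅ F) → (S.X₃ ≅ X) →
    ∃ r : S.X₂ ⟶ S.X₁, S.f ≫ r = 𝟙 S.X₁

variable {C : Type u} [Category.{v} C] [Preadditive C] [HasZeroObject C]
  [HasShift C ℤ] [∀ n : ℤ, (CategoryTheory.shiftFunctor C n).Additive] [Pretriangulated C]

/-- The shift `D[n]` of a collection of objects, closed under isomorphism. -/
def shiftSet (D : Set C) (n : ℤ) : Set C :=
  {X | ∃ Y ∈ D, Nonempty (X ≅ Y⟦n⟧)}

/-- `f` factors through an object of `D`. -/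
def Factors (D : Set C) {A B : C} (f : A ⟶ B) : Prop :=
  ∃ (Z : C) (g : A ⟶ Z) (h : Z ⟶ B), Z ∈ D ∧ f = g ≫ h

/-- `X * Y`: objects `M` admitting a distinguished triangle `A → M → B → A[1]`
with `A ∈ X`, `B ∈ Y`. -/
def star (X Y : Set C) : Set C :=
  {M | ∃ (A B : C) (f : A ⟶ M) (g : M ⟶ B) (h : B ⟶ A⟦(1:ℤ)⟧),
    A ∈ X ∧ B ∈ Y ∧ (Triangle.mk f g h ∈ distTriang C)}

/-- `R` is rigid: `Hom(R, R[1]) = 0`. -/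
def Rigid (R : Set C) : Prop :=
  ∀ ⦃A B : C⦄, A ∈ R → B ∈ R → ∀ f : A ⟶ B⟦(1:ℤ)⟧, f = 0

/-- `[R[1]](X, Y[1]) = 0` : every morphism from an object of `X` to a first shift of
an object of `Y` which factors through `R[1]` vanishes. -/
def RelRigid (R X Y : Set C) : Prop :=
  ∀ ⦃A B : C⦄, A ∈ X → B ∈ Y → ∀ f : A ⟶ B⟦(1:ℤ)⟧, Factors (shiftSet R 1) f → f = 0

/-- Closure of a collection of objects under finite direct sums and direct summands. -/
inductive addClosure (D : Set C) : C → Prop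
  | of {X : C} : X ∈ D → addClosure D X
  | zero {X : C} : IsZero X → addClosure D X
  | sum {X Y Z : C} : addClosure D X → addClosure D Y →
      (∃ (pX : Z ⟶ X) (pY : Z ⟶ Y) (iX : X ⟶ Z) (iY : Y ⟶ Z),
        iX ≫ pX = 𝟙 X ∧ iY ≫ pY = 𝟙 Y ∧ pX ≫ iX + pY ≫ iY = 𝟙 Z) →
      addClosure D Z
  | smd {X Y : C} : addClosure D Y → (∃ (s : X ⟶ Y) (r : Y ⟶ X), s ≫ r = 𝟙 X) →
      addClosure D X

/-- `D` is closed under finite direct sums and direct summands. -/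
def AddClosed (D : Set C) : Prop := ∀ X : C, addClosure D X → X ∈ D

/-- closed under direct sums (expressed via biproduct data). -/
def SumClosed (D : Set C) : Prop :=
  ∀ ⦃X Y Z : C⦄, X ∈ D → Y ∈ D →
    (∃ (pX : Z ⟶ X) (pY : Z ⟶ Y) (iX : X ⟶ Z) (iY : Y ⟶ Z),
      iX ≫ pX = 𝟙 X ∧ iY ≫ pY = 𝟙 Y ∧ pX ≫ iX + pY ≫ iY = 𝟙 Z) → Z ∈ D

/-- closed under direct summands. -/
def SummandClosed (D : Set C) : Prop :=
  ∀ ⦃X Y : C⦄, Y ∈ D → (∃ (s : X ⟶ Y) (r : Y ⟶ X), s ≫ r = 𝟙 X) → X ∈ D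

/-- closed under isomorphisms. -/
def IsoClosed (D : Set C) : Prop :=
  ∀ ⦃X Y : C⦄, X ∈ D → Nonempty (X ≅ Y) → Y ∈ D

/-- `f : A ⟶ X` is a left `D`-approximation of `A`. -/
def IsLeftApprox (D : Set C) {A X : C} (f : A ⟶ X) : Prop :=
  X ∈ D ∧ ∀ ⦃X' : C⦄, X' ∈ D → ∀ g : A ⟶ X', ∃ h : X ⟶ X', f ≫ h = g

/-- `f : X ⟶ A` is a right `D`-approximation of `A`. -/
def IsRightApprox (D : Set C) {X A : C} (f : X ⟶ A) : Prop :=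
  X ∈ D ∧ ∀ ⦃X' : C⦄, X' ∈ D → ∀ g : X' ⟶ A, ∃ h : X' ⟶ X, h ≫ f = g

/-- `f` is left minimal. -/
def LeftMinimal {A B : C} (f : A ⟶ B) : Prop :=
  ∀ u : B ⟶ B, f ≫ u = f → IsIso u

/-- `f` is right minimal. -/
def RightMinimal {A B : C} (f : A ⟶ B) : Prop :=
  ∀ u : A ⟶ A, u ≫ f = f → IsIso u

/-- `f` lies in the Jacobson radical of the category. -/
def InRadical {A B : C} (f : A ⟶ B) : Prop :=
  ∀ g : B ⟶ A, IsIso (𝟙 A - f ≫ g)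

/-- indecomposable object. -/
def Indec (W : C) : Prop :=
  ¬ IsZero W ∧ ∀ p : W ⟶ W, p ≫ p = p → p = 0 ∨ p = 𝟙 W

/-- two-term `R[1]`-rigid subcategory. -/
def TwoTermRigid (R X : Set C) : Prop :=
  RelRigid R X X ∧ X ⊆ star R (shiftSet R 1)

/-- two-term maximal `R[1]`-rigid subcategory. -/
def TwoTermMaximal (R X : Set C) : Prop :=
  TwoTermRigid R X ∧
  ∀ M ∈ star R (shiftSet R 1),
    RelRigid R {Z | addClosure (insert M X) Z} {Z | addClosure (insert M X) Z} → M ∈ X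

/-- two-term weak `R[1]`-cluster tilting subcategory. -/
def TwoTermWCT (R X : Set C) : Prop :=
  X ⊆ star R (shiftSet R 1) ∧ R ⊆ star (shiftSet X (-1)) X ∧
  ∀ M : C, M ∈ X ↔ (M ∈ star R (shiftSet R 1) ∧ RelRigid R {M} X ∧ RelRigid R X {M})

/-- `R(X) = { R₀ ∈ R | Hom(R₀, X) = 0 }`. -/
def RZero (R X : Set C) : Set C :=
  {A | A ∈ R ∧ ∀ B ∈ X, ∀ f : A ⟶ B, f = 0}

/-- `X` is `R[1]`-functorially finite. -/
def RFunctoriallyFinite (R X : Set C) : Prop :=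
  (∀ R₀ ∈ R, ∃ (X₀ : C) (f : R₀ ⟶ X₀), IsLeftApprox X f) ∧
  (∀ A ∈ shiftSet R 1, ∃ (X₀ : C) (f : X₀ ⟶ A), IsRightApprox X f)

/-- Data of triangles `R₀ → X^{R₀} → V^{R₀} → R₀[1]` with minimal left `X`-approximations,
defining the completion `M_X`. -/
structure MData (R X : Set C) where
  obj : ∀ R₀ : C, R₀ ∈ R → C
  cone : ∀ R₀ : C, R₀ ∈ R → C
  f : ∀ (R₀ : C) (h : R₀ ∈ R), R₀ ⟶ obj R₀ h
  g : ∀ (R₀ : C) (h : R₀ ∈ R), obj R₀ h ⟶ cone R₀ h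
  w : ∀ (R₀ : C) (h : R₀ ∈ R), cone R₀ h ⟶ R₀⟦(1:ℤ)⟧
  tri : ∀ (R₀ : C) (h : R₀ ∈ R), Triangle.mk (f R₀ h) (g R₀ h) (w R₀ h) ∈ distTriang C
  approx : ∀ (R₀ : C) (h : R₀ ∈ R), IsLeftApprox X (f R₀ h)
  minimal : ∀ (R₀ : C) (h : R₀ ∈ R), LeftMinimal (f R₀ h)

/-- `M_X = add (X ∪ {V^R | R ∈ R})`. -/
def MData.cat {R X : Set C} (d : MData R X) : Set C :=
  {Z | addClosure (X ∪ {V | ∃ (R₀ : C) (h : R₀ ∈ R), V = d.cone R₀ h}) Z}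

/-- Data of triangles `R₀ → V_{R₀} → U_{R₀} → R₀[1]` with the last map a right
`X`-approximation, defining the completion `N_X`. -/
structure NData (R X : Set C) where
  cocone : ∀ R₀ : C, R₀ ∈ R → C
  obj : ∀ R₀ : C, R₀ ∈ R → C
  a : ∀ (R₀ : C) (h : R₀ ∈ R), R₀ ⟶ cocone R₀ h
  b : ∀ (R₀ : C) (h : R₀ ∈ R), cocone R₀ h ⟶ obj R₀ h
  c : ∀ (R₀ : C) (h : R₀ ∈ R), obj R₀ h ⟶ R₀⟦(1:ℤ)⟧
  tri : ∀ (R₀ : C) (h : R₀ ∈ R), Triangle.mk (a R₀ h) (b R₀ h) (c R₀ h) ∈ distTriang C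
  approx : ∀ (R₀ : C) (h : R₀ ∈ R), IsRightApprox X (c R₀ h)

/-- `N_X = add (X ∪ {V_R | R ∈ R})`. -/
def NData.cat {R X : Set C} (d : NData R X) : Set C :=
  {Z | addClosure (X ∪ {V | ∃ (R₀ : C) (h : R₀ ∈ R), V = d.cocone R₀ h}) Z}

/-- `(M, N)` is an `X`-mutation pair. -/
def MutationPair (R X M N : Set C) : Prop :=
  M ≠ N ∧ TwoTermWCT R M ∧ TwoTermWCT R N ∧ X ⊆ M ∧ X ⊆ N ∧
  (∀ Y ∈ M, ∃ (Z X₀ : C) (z : Z ⟶ X₀) (x : X₀ ⟶ Y) (y : Y ⟶ Z⟦(1:ℤ)⟧),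
      Z ∈ N ∧ X₀ ∈ X ∧ (Triangle.mk z x y ∈ distTriang C) ∧ Factors (shiftSet R 1) y) ∧
  (∀ Z' ∈ N, ∃ (X' Y' : C) (z' : Z' ⟶ X') (x' : X' ⟶ Y') (y' : Y' ⟶ Z'⟦(1:ℤ)⟧),
      X' ∈ X ∧ Y' ∈ M ∧ (Triangle.mk z' x' y' ∈ distTriang C) ∧ Factors (shiftSet R 1) y')

/-- almost complete two-term weak `R[1]`-cluster tilting subcategory. -/
def AlmostComplete (R X : Set C) : Prop :=
  TwoTermRigid R X ∧ RFunctoriallyFinite R X ∧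
    ∃ W : C, Indec W ∧ W ∉ X ∧ TwoTermWCT R {Z | addClosure (insert W X) Z}

/-- completion of an almost complete subcategory `X`. -/
def IsCompletion (R X U : Set C) : Prop :=
  TwoTermWCT R U ∧ ∃ W : C, Indec W ∧ W ∉ X ∧ U = {Z | addClosure (insert W X) Z}


/-- The full subcategory on `R * R[1]`. -/
abbrev TwoTermSub (R : Set C) := ObjectProperty.FullSubcategory (fun Z : C => Z ∈ star R (shiftSet R 1))

/-- Morphisms are identified when their difference factors through `R[1]`. -/
def homRel (R : Set C) : HomRel (TwoTermSub R) := fun {A B} f g =>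
  Factors (shiftSet R 1) (f.hom - g.hom)

/-- the image, in the additive quotient `(R*R[1])/R[1]`, of a collection of objects. -/
def quotSet (R U : Set C) : Set (CategoryTheory.Quotient (homRel R)) :=
  {Z | Z.as.obj ∈ U}

/-!
Every object `M` of `R * R[1]` sits in a triangle `R₀ → M → R₁[1] → R₀[1]` with `R₀, R₁ ∈ R`,
and `R₀ → M` becomes an epimorphism in the quotient: a map out of `M` that it kills in the
quotient is killed by it in `C`, since a map out of `R₀` factoring through `R[1]` vanishes by
rigidity, so that map factors through `M → R₁[1]`. This gives enough projectives.

For projectivity of `P ∈ R` it suffices that epimorphisms onto `P` split. Precomposing one with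
such an epimorphism `R₀ → M` yields `e : R₀ → P` epi in the quotient. The cone `K` of `e` lies
in `R * R[1]` and `P → K` vanishes in the quotient, hence in `C` by rigidity, so `e` is split.
-/

end RelCT

theorem CategoryTheory.Projective.of_forall_isSplitEpi {Q : Type*} [Category Q] [Abelian Q]
    {P : Q} (h : ∀ {E : Q} (e : E ⟶ P) [Epi e], IsSplitEpi e) : Projective P where
  factors {E X} f e _ := by
    obtain ⟨⟨s, hs⟩⟩ := h (pullback.fst f e)
    exact ⟨s ≫ pullback.snd f e, by rw [Category.assoc, ← pullback.condition,
      ← Category.assoc, hs, Category.id_comp]⟩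

namespace RelCT

namespace Factors

variable {C : Type*} [Category C] {A A' B : C}

lemma comp_left {D : Set C} {f : A ⟶ B} (hf : Factors D f) (g : A' ⟶ A) :
    Factors D (g ≫ f) := by
  obtain ⟨Z, a, b, hZ, rfl⟩ := hf
  exact ⟨Z, g ≫ a, b, hZ, by simp⟩

lemma comp_right {D : Set C} {f : A ⟶ B} (hf : Factors D f) (g : B ⟶ A') :
    Factors D (f ≫ g) := by
  obtain ⟨Z, a, b, hZ, rfl⟩ := hf
  exact ⟨Z, a, b ≫ g, hZ, by simp⟩

variable [Preadditive C]

lemma neg {D : Set C} {f : A ⟶ B} (hf : Factors D f) : Factors D (-f) := by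
  obtain ⟨Z, a, b, hZ, rfl⟩ := hf
  exact ⟨Z, -a, b, hZ, by simp⟩

variable [HasShift C ℤ] {R : Set C}

lemma eq_zero_of_rigid (hrig : Rigid R) (hA : A ∈ R) {f : A ⟶ B}
    (hf : Factors (shiftSet R 1) f) : f = 0 := by
  obtain ⟨Z, a, b, ⟨Y, hY, ⟨e⟩⟩, rfl⟩ := hf
  have ha : a = (a ≫ e.hom) ≫ e.inv := by simp
  rw [ha, hrig hA hY (a ≫ e.hom), zero_comp, zero_comp]

end Factors

section ShiftSet

variable {C : Type*} [Category C] [Preadditive C] [HasShift C ℤ]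
  [∀ n : ℤ, (shiftFunctor C n).Additive] {R : Set C}

section

open ZeroObject

variable [HasZeroObject C]

lemma zero_mem_shiftSet (haddR : AddClosed R) : (0 : C) ∈ shiftSet R 1 :=
  ⟨0, haddR 0 (addClosure.zero (isZero_zero C)),
    ⟨(isZero_zero C).iso ((shiftFunctor C (1 : ℤ)).map_isZero (isZero_zero C))⟩⟩

lemma Factors.zero (haddR : AddClosed R) {A B : C} : Factors (shiftSet R 1) (0 : A ⟶ B) :=
  ⟨0, 0, 0, zero_mem_shiftSet haddR, by simp⟩

end

variable [HasBinaryBiproducts C]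

lemma biprod_mem_shiftSet (haddR : AddClosed R) {Z₁ Z₂ : C}
    (h₁ : Z₁ ∈ shiftSet R 1) (h₂ : Z₂ ∈ shiftSet R 1) : (Z₁ ⊞ Z₂) ∈ shiftSet R 1 := by
  obtain ⟨Y₁, hY₁, ⟨e₁⟩⟩ := h₁
  obtain ⟨Y₂, hY₂, ⟨e₂⟩⟩ := h₂
  have : PreservesBinaryBiproducts (shiftFunctor C (1 : ℤ)) :=
    preservesBinaryBiproducts_of_preservesBiproducts _
  refine ⟨Y₁ ⊞ Y₂, haddR _ (addClosure.sum (.of hY₁) (.of hY₂)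
    ⟨biprod.fst, biprod.snd, biprod.inl, biprod.inr, by simp, by simp, by simp [biprod.total]⟩),
    ⟨biprod.mapIso e₁ e₂ ≪≫ ((shiftFunctor C (1 : ℤ)).mapBiprod Y₁ Y₂).symm⟩⟩

lemma Factors.add (haddR : AddClosed R) {A B : C} {f g : A ⟶ B}
    (hf : Factors (shiftSet R 1) f) (hg : Factors (shiftSet R 1) g) :
    Factors (shiftSet R 1) (f + g) := by
  obtain ⟨Z₁, a₁, b₁, hZ₁, rfl⟩ := hf
  obtain ⟨Z₂, a₂, b₂, hZ₂, rfl⟩ := hg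
  exact ⟨Z₁ ⊞ Z₂, biprod.lift a₁ a₂, biprod.desc b₁ b₂, biprod_mem_shiftSet haddR hZ₁ hZ₂,
    by simp⟩

end ShiftSet

variable {C : Type u} [Category.{v} C] [Preadditive C] [HasZeroObject C]
  [HasShift C ℤ] [∀ n : ℤ, (CategoryTheory.shiftFunctor C n).Additive] [Pretriangulated C]

section Quotient

open ZeroObject

variable {R : Set C}

local notation "π" => Quotient.functor (homRel R)

lemma mem_star_of_mem (haddR : AddClosed R) {A : C} (hA : A ∈ R) :
    A ∈ star R (shiftSet R 1) :=
  ⟨A, 0, 𝟙 A, 0, 0, hA, zero_mem_shiftSet haddR, contractible_distinguished A⟩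

lemma homRel_congruence (haddR : AddClosed R) : Congruence (homRel R) where
  equivalence :=
    { refl f := by simpa only [homRel, sub_self] using Factors.zero haddR
      symm h := by simpa only [homRel, neg_sub] using Factors.neg h
      trans h₁ h₂ := by
        simpa only [homRel, sub_add_sub_cancel] using Factors.add haddR h₁ h₂ }
  comp_left f _ _ h := by
    simpa only [homRel, ObjectProperty.FullSubcategory.comp_hom, Preadditive.comp_sub]
      using Factors.comp_left h f.hom
  comp_right g h := by
    simpa only [homRel, ObjectProperty.FullSubcategory.comp_hom, Preadditive.sub_comp]
      using Factors.comp_right h g.hom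

lemma epi_map_of_distTriang (hrig : Rigid R) (haddR : AddClosed R) {P M : TwoTermSub R}
    (hP : P.obj ∈ R) {B : C} (f : P.obj ⟶ M.obj) (g : M.obj ⟶ B) (w : B ⟶ P.obj⟦(1 : ℤ)⟧)
    (hB : B ∈ shiftSet R 1) (htri : Triangle.mk f g w ∈ distTriang C) :
    Epi ((π).map (ObjectProperty.homMk f : P ⟶ M)) := by
  have := homRel_congruence haddR
  refine ⟨fun {W} u v huv => ?_⟩
  obtain ⟨u, rfl⟩ := (π).map_surjective (Y := W.as) u
  obtain ⟨v, rfl⟩ := (π).map_surjective (Y := W.as) v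
  rw [← (π).map_comp, ← (π).map_comp, Quotient.functor_map_eq_iff] at huv
  have hzero : f ≫ (u.hom - v.hom) = 0 := by
    refine Factors.eq_zero_of_rigid hrig hP ?_
    simpa only [homRel, ObjectProperty.FullSubcategory.comp_hom, ObjectProperty.homMk_hom,
      Preadditive.comp_sub] using huv
  obtain ⟨k, hk⟩ := Triangle.yoneda_exact₂ _ htri _ hzero
  exact (Quotient.functor_map_eq_iff _ _ _).2 ⟨B, g, k, hB, hk⟩

lemma exists_section_of_epi_map (hrig : Rigid R) (haddR : AddClosed R) {E P : TwoTermSub R}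
    (hE : E.obj ∈ R) (hP : P.obj ∈ R) (e : E.obj ⟶ P.obj)
    (he : Epi ((π).map (ObjectProperty.homMk e : E ⟶ P))) :
    ∃ s : P.obj ⟶ E.obj, s ≫ e = 𝟙 P.obj := by
  have := homRel_congruence haddR
  obtain ⟨K, u, v, htri⟩ := distinguished_cocone_triangle e
  let K' : TwoTermSub R :=
    ⟨K, P.obj, _, u, v, _, hP, ⟨E.obj, hE, ⟨Iso.refl _⟩⟩, rot_of_distTriang _ htri⟩
  have hu_quot : (π).map (ObjectProperty.homMk u : P ⟶ K') = (π).map (ObjectProperty.homMk 0) := by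
    rw [← cancel_epi ((π).map (ObjectProperty.homMk e : E ⟶ P)), ← (π).map_comp, ← (π).map_comp]
    congr 1
    ext
    exact (comp_distTriang_mor_zero₁₂ _ htri).trans comp_zero.symm
  have hu : u = 0 := by
    refine Factors.eq_zero_of_rigid hrig hP ?_
    simpa only [homRel, ObjectProperty.homMk_hom, sub_zero]
      using (Quotient.functor_map_eq_iff _ _ _).1 hu_quot
  obtain ⟨s, hs⟩ := Triangle.coyoneda_exact₂ _ htri (𝟙 P.obj) ((Category.id_comp u).trans hu)
  exact ⟨s, hs.symm⟩

lemma isSplitEpi_of_epi (hrig : Rigid R) (haddR : AddClosed R) {P : TwoTermSub R}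
    (hP : P.obj ∈ R) {X : Quotient (homRel R)} (e : X ⟶ (π).obj P) [Epi e] : IsSplitEpi e := by
  obtain ⟨e, rfl⟩ := (π).map_surjective (X := X.as) e
  obtain ⟨A, B, α, β, w, hA, hB, htri⟩ := X.as.property
  let A' : TwoTermSub R := ⟨A, mem_star_of_mem haddR hA⟩
  have := epi_map_of_distTriang hrig haddR (P := A') hA α β w hB htri
  have hαe : Epi ((π).map ((ObjectProperty.homMk α : A' ⟶ X.as) ≫ e)) := by
    rw [(π).map_comp]
    infer_instance
  obtain ⟨s, hs⟩ := exists_section_of_epi_map hrig haddR (E := A') hA hP (α ≫ e.hom) hαe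
  refine ⟨⟨(π).map (ObjectProperty.homMk (s ≫ α)), ?_⟩⟩
  rw [← (π).map_comp, ← (π).map_id]
  congr 1
  ext
  simpa using hs

lemma projective_obj_of_mem (hrig : Rigid R) (haddR : AddClosed R) {P : TwoTermSub R}
    (hP : P.obj ∈ R) [Abelian (Quotient (homRel R))] : Projective ((π).obj P) :=
  Projective.of_forall_isSplitEpi fun e _ => isSplitEpi_of_epi hrig haddR hP e

end Quotient

theorem statement_16_general (R : Set C)
    (hrig : Rigid R) (haddR : AddClosed R)
    [Abelian (CategoryTheory.Quotient (homRel R))] :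
    (∀ P : TwoTermSub R, P.obj ∈ R →
        Projective ((CategoryTheory.Quotient.functor (homRel R)).obj P)) ∧
      ∀ Z : CategoryTheory.Quotient (homRel R),
        ∃ (P : TwoTermSub R) (f : (CategoryTheory.Quotient.functor (homRel R)).obj P ⟶ Z),
          P.obj ∈ R ∧ Epi f := by
  refine ⟨fun _ hP => projective_obj_of_mem hrig haddR hP, fun Z => ?_⟩
  obtain ⟨A, B, f, g, w, hA, hB, htri⟩ := Z.as.property
  let P : TwoTermSub R := ⟨A, mem_star_of_mem haddR hA⟩
  exact ⟨P, (Quotient.functor (homRel R)).map (ObjectProperty.homMk f), hA,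
    epi_map_of_distTriang hrig haddR (P := P) hA f g w hB htri⟩

theorem statement_16 (hKS : KrullSchmidtCat C) (R : Set C)
    (hrig : Rigid R) (haddR : AddClosed R)
    [Abelian (CategoryTheory.Quotient (homRel R))] :
    (∀ P : TwoTermSub R, P.obj ∈ R →
        Projective ((CategoryTheory.Quotient.functor (homRel R)).obj P)) ∧
      ∀ Z : CategoryTheory.Quotient (homRel R),
        ∃ (P : TwoTermSub R) (f : (CategoryTheory.Quotient.functor (homRel R)).obj P ⟶ Z),
          P.obj ∈ R ∧ Epi f :=
  statement_16_general R hrig haddR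

end RelCT
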